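/- arXiv:1401.2802 — 8 statements merged into one kernel-verified Lean document; each statement's English description precedes it below -/
import Mathlib

section
/- Let E be a compact metric space and (S(t)) a strongly continuous Markov (positive, conservative) contraction semigroup on C(E) with generator A. Define V(t)f = log(S(t)e^f) for f ∈ C(E). If f ∈ C(E) and e^f ∈ D(A), then f is in the domain of the generator H of V, i.e. lim_{t↓0} ‖(V(t)f − f)/t − e^{−f}·A(e^f)‖_∞ = 0. -/
/-!
Write `S(t)e^f = e^f (1 + r_t)` with `r_t = t e^{-f} D_t`, where `D_t = (S(t)e^f - e^f)/t`
converges uniformly to `A(e^f)`. Then `(V(t)f - f)/t = log (1 + r_t) / t`, and the estimate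
`|log (1 + r) - r| ≤ 2 r²` for `|r| ≤ 1/2` shows that this differs from `e^{-f} D_t` by
`O(t ‖D_t‖²)` uniformly on `E`.
-/

open Filter Topology

noncomputable def expMap {E : Type*} [TopologicalSpace E] (f : C(E, ℝ)) : C(E, ℝ) :=
  ⟨fun x => Real.exp (f x), Real.continuous_exp.comp f.continuous⟩

theorem Real.abs_log_one_add_sub_self_le {r : ℝ} (hr : |r| ≤ 1 / 2) :
    |Real.log (1 + r) - r| ≤ 2 * r ^ 2 := by
  have h := Real.abs_log_sub_add_sum_range_le (x := -r) (by rw [abs_neg]; linarith) 1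
  simp only [Finset.sum_range_one, zero_add, pow_one, Nat.cast_zero, div_one, abs_neg,
    sub_neg_eq_add] at h
  calc |Real.log (1 + r) - r| = |-r + Real.log (1 + r)| := by ring_nf
    _ ≤ |r| ^ 2 / (1 - |r|) := h
    _ ≤ 2 * r ^ 2 := by
      rw [div_le_iff₀ (by linarith), sq_abs]
      nlinarith [sq_nonneg r]

theorem abs_log_exp_add_mul_div_sub_le {y d a t K : ℝ} (ht : 0 < t) (hK : Real.exp (-y) ≤ K)
    (hsmall : K * t * |d| ≤ 1 / 2) :
    |(Real.log (Real.exp y + t * d) - y) / t - Real.exp (-y) * a|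
      ≤ 2 * K ^ 2 * t * d ^ 2 + K * |d - a| := by
  set r := Real.exp (-y) * t * d with hr
  have hK0 : 0 ≤ K := (Real.exp_pos _).le.trans hK
  have hr_le : |r| ≤ K * t * |d| := by
    rw [abs_mul, abs_mul, abs_of_pos (Real.exp_pos _), abs_of_pos ht]
    gcongr
  have hr_half : |r| ≤ 1 / 2 := hr_le.trans hsmall
  have h1r : 0 < 1 + r := by linarith [neg_abs_le r]
  have hlog : Real.log (Real.exp y + t * d) = y + Real.log (1 + r) := by
    rw [← Real.log_exp y, ← Real.log_mul (Real.exp_pos y).ne' h1r.ne', Real.log_exp]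
    congr 1
    rw [hr, Real.exp_neg]
    field_simp
  have hsplit : (Real.log (Real.exp y + t * d) - y) / t - Real.exp (-y) * a
      = (Real.log (1 + r) - r) / t + Real.exp (-y) * (d - a) := by
    rw [hlog, hr]
    field_simp
    ring
  rw [hsplit]
  refine (abs_add_le _ _).trans (add_le_add ?_ ?_)
  · calc |(Real.log (1 + r) - r) / t| ≤ 2 * r ^ 2 / t := by
          rw [abs_div, abs_of_pos ht]
          gcongr
          exact Real.abs_log_one_add_sub_self_le hr_half
      _ = 2 * Real.exp (-y) ^ 2 * t * d ^ 2 := by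
          rw [hr]
          field_simp
      _ ≤ 2 * K ^ 2 * t * d ^ 2 := by gcongr
  · rw [abs_mul, abs_of_pos (Real.exp_pos _)]
    gcongr

theorem tendsto_iSup_abs_log_div_sub_of_tendsto {E : Type*} [TopologicalSpace E]
    [CompactSpace E] (u : ℝ → C(E, ℝ)) (f a : C(E, ℝ))
    (h : Tendsto (fun t : ℝ => t⁻¹ • (u t - expMap f)) (𝓝[>] 0) (𝓝 a)) :
    Tendsto (fun t : ℝ => ⨆ x : E, |(Real.log (u t x) - f x) / t - Real.exp (-(f x)) * a x|)
      (𝓝[>] 0) (𝓝 0) := by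
  set D : ℝ → C(E, ℝ) := fun t => t⁻¹ • (u t - expMap f)
  set K := Real.exp ‖f‖
  have hexp_neg_le : ∀ x, Real.exp (-(f x)) ≤ K := fun x =>
    Real.exp_le_exp.2 ((neg_le_abs (f x)).trans (f.norm_coe_le_norm x))
  have hu : ∀ t : ℝ, t ≠ 0 → ∀ x, u t x = Real.exp (f x) + t * D t x := fun t ht x => by
    simp [D, expMap, ht]
  have ht : Tendsto (fun t : ℝ => t) (𝓝[>] 0) (𝓝 0) := nhdsWithin_le_nhds
  have hbound :
      Tendsto (fun t => 2 * K ^ 2 * t * ‖D t‖ ^ 2 + K * ‖D t - a‖) (𝓝[>] 0) (𝓝 0) := by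
    simpa using ((tendsto_const_nhds.mul ht).mul (h.norm.pow 2)).add
      (tendsto_const_nhds.mul (h.sub_const a).norm)
  have hsmall : ∀ᶠ t in 𝓝[>] 0, K * t * ‖D t‖ ≤ 1 / 2 := by
    have : Tendsto (fun t => K * t * ‖D t‖) (𝓝[>] 0) (𝓝 0) := by
      simpa using (tendsto_const_nhds.mul ht).mul h.norm
    exact this.eventually (eventually_le_nhds (by norm_num))
  refine squeeze_zero'
    (Eventually.of_forall fun t => Real.iSup_nonneg fun x => abs_nonneg _) ?_ hbound
  filter_upwards [self_mem_nhdsWithin, hsmall] with t (ht : 0 < t) hsmall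
  refine Real.iSup_le (fun x => ?_) (by positivity)
  have hDx : |D t x| ≤ ‖D t‖ := (D t).norm_coe_le_norm x
  have hDax : |D t x - a x| ≤ ‖D t - a‖ := (D t - a).norm_coe_le_norm x
  rw [hu t ht.ne']
  have hsmall_x : K * t * |D t x| ≤ 1 / 2 := by
    refine le_trans ?_ hsmall
    gcongr
  calc _ ≤ 2 * K ^ 2 * t * D t x ^ 2 + K * |D t x - a x| :=
        abs_log_exp_add_mul_div_sub_le ht (hexp_neg_le x) hsmall_x
    _ ≤ 2 * K ^ 2 * t * ‖D t‖ ^ 2 + K * ‖D t - a‖ := by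
        rw [← sq_abs (D t x)]
        gcongr

theorem stmt_3_general {E : Type*} [MetricSpace E] [CompactSpace E]
    (S : ℝ → C(E, ℝ) →L[ℝ] C(E, ℝ))
    (f Aef : C(E, ℝ))
    (hAef : Tendsto (fun t : ℝ => t⁻¹ • (S t (expMap f) - expMap f)) (𝓝[>] 0) (𝓝 Aef)) :
    Tendsto
      (fun t : ℝ =>
        ⨆ x : E, |(Real.log ((S t (expMap f)) x) - f x) / t - Real.exp (-(f x)) * Aef x|)
      (𝓝[>] 0) (𝓝 0) :=
  tendsto_iSup_abs_log_div_sub_of_tendsto (fun t => S t (expMap f)) f Aef hAef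

/-- For a strongly continuous Markov semigroup `S(t)` on `C(E)` (`E` compact metric) with
generator `A`, and `V(t)f := log (S(t) e^f)`: if `e^f ∈ D(A)` (with `A(e^f) = Aef`), then `f`
is in the domain of the generator `H` of `V`, with `Hf = e^{-f} A(e^f)`, i.e.
`(V(t)f - f)/t → e^{-f}·A(e^f)` uniformly as `t ↓ 0`. -/
theorem stmt_3 {E : Type*} [MetricSpace E] [CompactSpace E]
    (S : ℝ → C(E, ℝ) →L[ℝ] C(E, ℝ))
    (hS0 : S 0 = ContinuousLinearMap.id ℝ C(E, ℝ))
    (hSsemi : ∀ s t : ℝ, 0 ≤ s → 0 ≤ t → S (s + t) = (S s).comp (S t))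
    (hScontr : ∀ t : ℝ, 0 ≤ t → ∀ g : C(E, ℝ), ‖S t g‖ ≤ ‖g‖)
    (hSpos : ∀ t : ℝ, 0 ≤ t → ∀ g : C(E, ℝ), 0 ≤ g → 0 ≤ S t g)
    (hSone : ∀ t : ℝ, 0 ≤ t → S t 1 = 1)
    (hSstrong : ∀ g : C(E, ℝ), ContinuousOn (fun t => S t g) (Set.Ici (0 : ℝ)))
    (f Aef : C(E, ℝ))
    (hAef : Tendsto (fun t : ℝ => t⁻¹ • (S t (expMap f) - expMap f)) (𝓝[>] 0) (𝓝 Aef)) :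
    Tendsto
      (fun t : ℝ =>
        ⨆ x : E, |(Real.log ((S t (expMap f)) x) - f x) / t - Real.exp (-(f x)) * Aef x|)
      (𝓝[>] 0) (𝓝 0) :=
  stmt_3_general S f Aef hAef
end

section
/- With E compact metric, (S(t)) a strongly continuous positive contraction semigroup on C(E) preserving constants, and V(t)f = log(S(t)e^f): the family (V(t))_{t≥0} is a semigroup (V(t+s) = V(t)V(s)), and each V(t) is a contraction for the sup norm: ‖V(t)f − V(t)g‖_∞ ≤ ‖f − g‖_∞ for all f, g ∈ C(E). -/
/-! A positive linear map `T` with `T 1 = 1` is monotone and fixes constants. Since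
`e^f ≤ e^{‖f - g‖} e^g` pointwise, `T e^f ≤ e^{‖f - g‖} T e^g`, and taking logarithms gives the
contraction. The bound `T e^f ≥ e^{-‖f‖} > 0` keeps these logarithms away from `log`'s junk
values and makes `exp ∘ log` the identity on `S(s) e^f`, so the semigroup law of `V` is that of
`S`. -/

open Filter Topology

open Real

section

variable {E : Type*} [TopologicalSpace E] [CompactSpace E]

lemma expMap_le_exp_norm_sub_smul (f g : C(E, ℝ)) : expMap f ≤ exp ‖f - g‖ • expMap g := by
  intro x
  have hfg : f x - g x ≤ ‖f - g‖ := le_of_abs_le (by simpa using (f - g).norm_coe_le_norm x)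
  calc exp (f x) = exp (f x - g x) * exp (g x) := by rw [← exp_add, sub_add_cancel]
    _ ≤ exp ‖f - g‖ * exp (g x) := by gcongr

lemma exp_neg_norm_smul_one_le_expMap (f : C(E, ℝ)) : exp (-‖f‖) • (1 : C(E, ℝ)) ≤ expMap f := by
  intro x
  simpa [expMap] using neg_le_of_abs_le (f.norm_coe_le_norm x)

variable (T : C(E, ℝ) →ₚ[ℝ] C(E, ℝ)) (hT : T 1 = 1)
include hT

lemma exp_neg_norm_le_apply_expMap (f : C(E, ℝ)) (x : E) : exp (-‖f‖) ≤ T (expMap f) x := by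
  simpa [hT] using OrderHomClass.mono T (exp_neg_norm_smul_one_le_expMap f) x

lemma apply_expMap_pos (f : C(E, ℝ)) (x : E) : 0 < T (expMap f) x :=
  (exp_pos _).trans_le (exp_neg_norm_le_apply_expMap T hT f x)

lemma log_apply_expMap_sub_le (f g : C(E, ℝ)) (x : E) :
    log (T (expMap f) x) - log (T (expMap g) x) ≤ ‖f - g‖ := by
  have hle : T (expMap f) x ≤ exp ‖f - g‖ * T (expMap g) x := by
    simpa using OrderHomClass.mono T (expMap_le_exp_norm_sub_smul f g) x
  have hg := apply_expMap_pos T hT g x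
  rw [sub_le_iff_le_add, ← log_exp ‖f - g‖, ← log_mul (exp_ne_zero _) hg.ne']
  exact log_le_log (apply_expMap_pos T hT f x) hle

lemma abs_log_apply_expMap_sub_le (f g : C(E, ℝ)) (x : E) :
    |log (T (expMap f) x) - log (T (expMap g) x)| ≤ ‖f - g‖ := by
  refine abs_sub_le_iff.2 ⟨log_apply_expMap_sub_le T hT f g x, ?_⟩
  simpa [norm_sub_rev] using log_apply_expMap_sub_le T hT g f x

end

theorem stmt_4_general {E : Type*} [MetricSpace E] [CompactSpace E]
    (S : ℝ → C(E, ℝ) →L[ℝ] C(E, ℝ))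
    (hSsemi : ∀ s t : ℝ, 0 ≤ s → 0 ≤ t → S (s + t) = (S s).comp (S t))
    (hSpos : ∀ t : ℝ, 0 ≤ t → ∀ g : C(E, ℝ), 0 ≤ g → 0 ≤ S t g)
    (hSone : ∀ t : ℝ, 0 ≤ t → S t 1 = 1) :
    (∀ s t : ℝ, 0 ≤ s → 0 ≤ t → ∀ f g : C(E, ℝ),
        (∀ y : E, g y = Real.exp (Real.log ((S s (expMap f)) y))) →
        ∀ x : E, Real.log ((S (t + s) (expMap f)) x) = Real.log ((S t g) x)) ∧
    (∀ t : ℝ, 0 ≤ t → ∀ f g : C(E, ℝ),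
        (⨆ x : E, |Real.log ((S t (expMap f)) x) - Real.log ((S t (expMap g)) x)|) ≤ ‖f - g‖) := by
  let T (t : ℝ) (ht : 0 ≤ t) : C(E, ℝ) →ₚ[ℝ] C(E, ℝ) :=
    PositiveLinearMap.mk₀ (S t).toLinearMap (hSpos t ht)
  refine ⟨fun s t hs ht f g hg x => ?_, fun t ht f g => ?_⟩
  · have hg_eq : g = S s (expMap f) := ContinuousMap.ext fun y =>
      (hg y).trans (exp_log (apply_expMap_pos (T s hs) (hSone s hs) f y))
    rw [hg_eq, hSsemi t s ht hs]
    rfl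
  · exact Real.iSup_le (abs_log_apply_expMap_sub_le (T t ht) (hSone t ht) f g) (norm_nonneg _)

/-- For a strongly continuous Markov semigroup `S(t)` on `C(E)` (`E` compact metric) and
`V(t)f := log (S(t) e^f)`: the family `(V(t))` is a semigroup, `V(t+s)f = V(t)(V(s)f)`
(here `g` is the continuous function `e^{V(s)f} = exp (log (S(s)e^f))` so that
`V(t)(V(s)f) = log (S(t) g)`), and each `V(t)` is a sup-norm contraction. -/
theorem stmt_4 {E : Type*} [MetricSpace E] [CompactSpace E]
    (S : ℝ → C(E, ℝ) →L[ℝ] C(E, ℝ))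
    (hS0 : S 0 = ContinuousLinearMap.id ℝ C(E, ℝ))
    (hSsemi : ∀ s t : ℝ, 0 ≤ s → 0 ≤ t → S (s + t) = (S s).comp (S t))
    (hScontr : ∀ t : ℝ, 0 ≤ t → ∀ g : C(E, ℝ), ‖S t g‖ ≤ ‖g‖)
    (hSpos : ∀ t : ℝ, 0 ≤ t → ∀ g : C(E, ℝ), 0 ≤ g → 0 ≤ S t g)
    (hSone : ∀ t : ℝ, 0 ≤ t → S t 1 = 1)
    (hSstrong : ∀ g : C(E, ℝ), ContinuousOn (fun t => S t g) (Set.Ici (0 : ℝ))) :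
    (∀ s t : ℝ, 0 ≤ s → 0 ≤ t → ∀ f g : C(E, ℝ),
        (∀ y : E, g y = Real.exp (Real.log ((S s (expMap f)) y))) →
        ∀ x : E, Real.log ((S (t + s) (expMap f)) x) = Real.log ((S t g) x)) ∧
    (∀ t : ℝ, 0 ≤ t → ∀ f g : C(E, ℝ),
        (⨆ x : E, |Real.log ((S t (expMap f)) x) - Real.log ((S t (expMap g)) x)|) ≤ ‖f - g‖) :=
  stmt_4_general S hSsemi hSpos hSone
end

section
/- Let E be compact metric, (S(t)) a strongly continuous Markov semigroup with generator A, λ > 0, J(λ) = (I − λA)^{−1}, H f = e^{−f}A(e^f) for f with e^f ∈ D(A), and R(λ)f = log(J(λ)e^f). Then for any f ∈ C(E): R(λ)f is in the domain of H and (I − λH)(R(λ)f) ≥ f pointwise. -/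
open Filter Topology

/-!
Write `u = J e^f`. Since `J` is positive and `J 1 = 1`, `u` is bounded below by `min e^f > 0`,
so `e^{log u} = u` lies in the range of `J`, which is contained in the domain of `A`, and the
resolvent identity gives `λ A u = u - e^f`. The claimed inequality then reads
`f ≤ log u - 1 + e^f / u`, which is `log t ≤ t - 1` at `t = e^f / u`.
-/

@[simp]
lemma expMap_apply {E : Type*} [TopologicalSpace E] (f : C(E, ℝ)) (x : E) :
    expMap f x = Real.exp (f x) :=
  rfl

lemma Real.le_log_add_exp_div_sub_one {y : ℝ} (hy : 0 < y) (c : ℝ) :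
    c ≤ Real.log y + Real.exp c / y - 1 := by
  have h := Real.log_le_sub_one_of_pos (div_pos (Real.exp_pos c) hy)
  rw [Real.log_div (Real.exp_pos c).ne' hy.ne', Real.log_exp] at h
  linarith

namespace ContinuousMap

variable {E : Type*} [TopologicalSpace E] [CompactSpace E]

lemma exists_pos_le_of_forall_pos (g : C(E, ℝ)) (hg : ∀ x, 0 < g x) :
    ∃ ε > 0, ∀ x, ε ≤ g x := by
  cases isEmpty_or_nonempty E with
  | inl _ => exact ⟨1, one_pos, isEmptyElim⟩
  | inr _ =>
    obtain ⟨x₀, -, hx₀⟩ :=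
      isCompact_univ.exists_isMinOn Set.univ_nonempty g.continuous.continuousOn
    exact ⟨g x₀, hg x₀, fun x => hx₀ (Set.mem_univ x)⟩

lemma apply_pos_of_markov (J : C(E, ℝ) →ₗ[ℝ] C(E, ℝ))
    (hJpos : ∀ g : C(E, ℝ), 0 ≤ g → 0 ≤ J g) (hJone : J 1 = 1)
    (g : C(E, ℝ)) (hg : ∀ x, 0 < g x) (x : E) : 0 < J g x := by
  obtain ⟨ε, hε, hεg⟩ := g.exists_pos_le_of_forall_pos hg
  have hlower : 0 ≤ J (g - ε • 1) := hJpos _ fun y => by simpa using hεg y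
  have hx : (0 : C(E, ℝ)) x ≤ J (g - ε • 1) x := hlower x
  simp only [map_sub, map_smul, hJone, zero_apply, sub_apply, smul_apply, one_apply,
    smul_eq_mul, mul_one] at hx
  linarith

end ContinuousMap

theorem stmt_6_general {E : Type*} [MetricSpace E] [CompactSpace E]
    (domA : Set C(E, ℝ)) (A : C(E, ℝ) → C(E, ℝ)) (lam : ℝ)
    (J : C(E, ℝ) →L[ℝ] C(E, ℝ))
    (hJdom : ∀ g : C(E, ℝ), J g ∈ domA)
    (hres : ∀ g : C(E, ℝ), J g - lam • A (J g) = g)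
    (hJpos : ∀ g : C(E, ℝ), 0 ≤ g → 0 ≤ J g)
    (hJone : J 1 = 1)
    (f : C(E, ℝ)) :
    ∀ g : C(E, ℝ), (∀ x : E, g x = Real.exp (Real.log ((J (expMap f)) x))) →
      g ∈ domA ∧
      ∀ x : E,
        f x ≤ Real.log ((J (expMap f)) x) -
          lam * (Real.exp (-Real.log ((J (expMap f)) x)) * (A g) x) := by
  intro g hg
  have hpos : ∀ x, 0 < J (expMap f) x :=
    ContinuousMap.apply_pos_of_markov J.toLinearMap hJpos hJone _ fun x => Real.exp_pos (f x)
  obtain rfl : g = J (expMap f) := ContinuousMap.ext fun x => by rw [hg, Real.exp_log (hpos x)]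
  refine ⟨hJdom _, fun x => ?_⟩
  have hAx : lam * A (J (expMap f)) x = J (expMap f) x - Real.exp (f x) := by
    have := DFunLike.congr_fun (hres (expMap f)) x
    simp only [ContinuousMap.sub_apply, ContinuousMap.smul_apply, smul_eq_mul,
      expMap_apply] at this
    linarith
  have hux := hpos x
  calc f x ≤ Real.log (J (expMap f) x) + Real.exp (f x) / J (expMap f) x - 1 :=
        Real.le_log_add_exp_div_sub_one hux (f x)
    _ = _ := by
        rw [Real.exp_neg, Real.exp_log hux, mul_left_comm, hAx]
        field_simp
        ring

/-- Let `A` (with domain `domA`) be the generator of a Markov semigroup on `C(E)` (`E` compact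
metric), `λ > 0`, and `J = J(λ) = (I - λA)⁻¹` the resolvent, which maps into `domA`, satisfies
`(I - λA) J = I`, is positivity preserving with `J 1 = 1`. Put `R(λ)f = log (J e^f)` and
`Hh = e^{-h} A(e^h)`. Then for every `f ∈ C(E)`, `R(λ)f` is in the domain of `H`
(i.e. `e^{R(λ)f} ∈ domA`, where `g` denotes the continuous function `e^{R(λ)f}`), and
`(I - λH)(R(λ)f) ≥ f` pointwise. -/
theorem stmt_6 {E : Type*} [MetricSpace E] [CompactSpace E]
    (domA : Set C(E, ℝ)) (A : C(E, ℝ) → C(E, ℝ)) (lam : ℝ) (hlam : 0 < lam)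
    (J : C(E, ℝ) →L[ℝ] C(E, ℝ))
    (hJdom : ∀ g : C(E, ℝ), J g ∈ domA)
    (hres : ∀ g : C(E, ℝ), J g - lam • A (J g) = g)
    (hJpos : ∀ g : C(E, ℝ), 0 ≤ g → 0 ≤ J g)
    (hJone : J 1 = 1)
    (f : C(E, ℝ)) :
    ∀ g : C(E, ℝ), (∀ x : E, g x = Real.exp (Real.log ((J (expMap f)) x))) →
      g ∈ domA ∧
      ∀ x : E,
        f x ≤ Real.log ((J (expMap f)) x) -
          lam * (Real.exp (-Real.log ((J (expMap f)) x)) * (A g) x) :=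
  stmt_6_general domA A lam J hJdom hres hJpos hJone f
end

section
/- Let E be a finite set, r: E × E → ℝ≥0, and define Hf(x) = Σ_y r(x,y)(e^{f(y)−f(x)} − 1), A^g f(x) = Σ_y r(x,y)e^{g(y)−g(x)}(f(y) − f(x)), and Lg = A^g g − Hg. Then for every x ∈ E and all f, g: E → ℝ, Hf(x) ≥ A^g f(x) − Lg(x), with equality when g = f. -/
/-- `Hf(x) = Σ_y r(x,y)(e^{f(y)-f(x)} - 1)` for a finite-state Markov jump process. -/
noncomputable def Hop {E : Type*} [Fintype E] (r : E → E → ℝ) (f : E → ℝ) (x : E) : ℝ :=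
  ∑ y, r x y * (Real.exp (f y - f x) - 1)

/-- `A^g f(x) = Σ_y r(x,y) e^{g(y)-g(x)} (f(y)-f(x))`, the tilted generator. -/
noncomputable def Aop {E : Type*} [Fintype E] (r : E → E → ℝ) (g f : E → ℝ) (x : E) : ℝ :=
  ∑ y, r x y * Real.exp (g y - g x) * (f y - f x)

/-- `Lg = A^g g - Hg`, the pre-Lagrangian. -/
noncomputable def Lop {E : Type*} [Fintype E] (r : E → E → ℝ) (g : E → ℝ) (x : E) : ℝ :=
  Aop r g g x - Hop r g x

lemma Real.exp_mul_sub_add_exp_le_exp (a b : ℝ) : Real.exp b * (a - b) + Real.exp b ≤ Real.exp a :=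
  calc Real.exp b * (a - b) + Real.exp b = Real.exp b * (a - b + 1) := by ring
    _ ≤ Real.exp b * Real.exp (a - b) :=
        mul_le_mul_of_nonneg_left (Real.add_one_le_exp _) (Real.exp_pos b).le
    _ = Real.exp a := by rw [← Real.exp_add, add_sub_cancel]

section OperatorDuality

variable {E : Type*} [Fintype E] (r : E → E → ℝ)

lemma Aop_sub_Lop_eq_sum (f g : E → ℝ) (x : E) :
    Aop r g f x - Lop r g x = ∑ y, r x y *
      (Real.exp (g y - g x) * ((f y - f x) - (g y - g x)) + Real.exp (g y - g x) - 1) := by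
  simp only [Lop, Aop, Hop, ← Finset.sum_sub_distrib]
  exact Finset.sum_congr rfl fun y _ => by ring

lemma Aop_sub_Lop_le_Hop (hr : ∀ x y, 0 ≤ r x y) (f g : E → ℝ) (x : E) :
    Aop r g f x - Lop r g x ≤ Hop r f x := by
  rw [Aop_sub_Lop_eq_sum, Hop]
  refine Finset.sum_le_sum fun y _ => mul_le_mul_of_nonneg_left ?_ (hr x y)
  linarith [Real.exp_mul_sub_add_exp_le_exp (f y - f x) (g y - g x)]

lemma Aop_self_sub_Lop (f : E → ℝ) (x : E) : Aop r f f x - Lop r f x = Hop r f x :=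
  sub_sub_cancel _ _

end OperatorDuality

/-- Pointwise operator duality: `Hf(x) ≥ A^g f(x) - Lg(x)` for all `f, g`, with equality
when `g = f`. -/
theorem stmt_8 {E : Type*} [Fintype E] (r : E → E → ℝ) (hr : ∀ x y, 0 ≤ r x y) :
    ∀ (f g : E → ℝ) (x : E),
      Aop r g f x - Lop r g x ≤ Hop r f x ∧ Aop r f f x - Lop r f x = Hop r f x :=
  fun f g x => ⟨Aop_sub_Lop_le_Hop r hr f g x, Aop_self_sub_Lop r f x⟩
end

section
/- Let D be a barrelled locally convex space, N ⊆ D a barrel such that sup_{f ∈ cN}‖Hf‖ < ∞ for every c > 0, where H: D → C(E). Let U = ⋃_n n·N° where N° is the polar of N in D'. If u ∈ D' \ U, then L(μ,u) = sup_{f∈D}(⟨f,u⟩ − ⟨Hf,μ⟩) = ∞ for every probability measure μ on E. -/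
/-! Outside `⋃ n, n • N°` the functional `u` is unbounded on `N`, and since `N` is balanced it
is unbounded above there. On `N` the penalty `∫ H f ∂μ ≤ ‖H f‖ ≤ 1`, so `f ↦ u f - ∫ H f ∂μ`
is unbounded above on `N`. -/

open MeasureTheory Pointwise

theorem ContinuousMap.integral_le_norm {E : Type*} [TopologicalSpace E] [CompactSpace E]
    [MeasurableSpace E] (μ : Measure E) [IsProbabilityMeasure μ] (h : C(E, ℝ)) :
    ∫ x, h x ∂μ ≤ ‖h‖ :=
  calc ∫ x, h x ∂μ ≤ ‖∫ x, h x ∂μ‖ := Real.le_norm_self _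
    _ ≤ ‖h‖ * μ.real Set.univ := norm_integral_le_of_norm_le_const (ae_of_all _ h.norm_coe_le_norm)
    _ = ‖h‖ := by simp

theorem Balanced.exists_mem_apply_eq_abs {D F : Type*} [AddCommGroup D] [Module ℝ D]
    [FunLike F D ℝ] [AddMonoidHomClass F D ℝ] {N : Set D} (hN : Balanced ℝ N) (u : F)
    {f : D} (hf : f ∈ N) : ∃ g ∈ N, u g = |u f| := by
  rcases abs_cases (u f) with ⟨h, _⟩ | ⟨h, _⟩
  · exact ⟨f, hf, h.symm⟩
  · exact ⟨-f, hN.neg_mem_iff.2 hf, by rw [map_neg, h]⟩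

section Polar

variable {D : Type*} [AddCommGroup D] [Module ℝ D] [TopologicalSpace D] {N : Set D}
  {u : WeakDual ℝ D}

theorem WeakDual.exists_lt_abs_apply_of_notMem_smul_polar {c : ℝ} (hc : 0 < c)
    (hu : u ∉ c • {v : WeakDual ℝ D | ∀ f ∈ N, |v f| ≤ 1}) : ∃ f ∈ N, c < |u f| := by
  rw [Set.mem_smul_set_iff_inv_smul_mem₀ hc.ne'] at hu
  simp only [Set.mem_ofPred_eq, not_forall, not_le] at hu
  obtain ⟨f, hf, hlt⟩ := hu
  refine ⟨f, hf, ?_⟩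
  rwa [show (c⁻¹ • u) f = c⁻¹ * u f from rfl, abs_mul, abs_of_pos (inv_pos.2 hc),
    lt_inv_mul_iff₀ hc, mul_one] at hlt

theorem Balanced.exists_mem_lt_apply_of_notMem_iUnion_smul_polar (hN : Balanced ℝ N)
    (hu : u ∉ ⋃ n : ℕ, (n : ℝ) • {v : WeakDual ℝ D | ∀ f ∈ N, |v f| ≤ 1}) (r : ℝ) :
    ∃ g ∈ N, r < u g := by
  obtain ⟨n, hn⟩ := exists_nat_gt r
  have hu_n : u ∉ ((n + 1 : ℕ) : ℝ) • {v : WeakDual ℝ D | ∀ f ∈ N, |v f| ≤ 1} :=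
    fun h ↦ hu (Set.mem_iUnion.2 ⟨n + 1, h⟩)
  obtain ⟨f, hf, hlt⟩ := WeakDual.exists_lt_abs_apply_of_notMem_smul_polar (by positivity) hu_n
  obtain ⟨g, hg, hug⟩ := hN.exists_mem_apply_eq_abs u hf
  refine ⟨g, hg, ?_⟩
  push_cast at hlt
  linarith

end Polar

theorem stmt_10_general {E D : Type*} [MetricSpace E] [CompactSpace E] [MeasurableSpace E]
    [AddCommGroup D] [Module ℝ D] [TopologicalSpace D]
    (H : D → C(E, ℝ)) (N : Set D)
    (hNbal : Balanced ℝ N)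
    (hH1 : ∀ f ∈ N, ‖H f‖ ≤ 1)
    (u : WeakDual ℝ D)
    (hu : u ∉ ⋃ n : ℕ, (n : ℝ) • {v : WeakDual ℝ D | ∀ f ∈ N, |v f| ≤ 1})
    (μ : Measure E) (hμ : IsProbabilityMeasure μ) :
    (⨆ f : D, ((u f - ∫ x, (H f) x ∂μ : ℝ) : EReal)) = ⊤ := by
  rw [EReal.eq_top_iff_forall_lt]
  intro r
  obtain ⟨g, hg, hlt⟩ := hNbal.exists_mem_lt_apply_of_notMem_iUnion_smul_polar hu (r + 1)
  refine lt_iSup_iff.2 ⟨g, EReal.coe_lt_coe_iff.2 ?_⟩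
  linarith [(H g).integral_le_norm μ, hH1 g hg]

/-- Let `D` be a barrelled locally convex space, `N ⊆ D` a barrel with
`sup_{f ∈ N} ‖Hf‖ ≤ 1` and `sup_{f ∈ cN} ‖Hf‖ < ∞` for every `c > 0`, and let
`U = ⋃_n n·N°` where `N° = {u ∈ D' : |⟨f,u⟩| ≤ 1 ∀ f ∈ N}` is the polar of `N`.
If `u ∈ D' \ U`, then `L(μ,u) = sup_{f ∈ D}(⟨f,u⟩ - ⟨Hf,μ⟩) = ∞` for every probability
measure `μ` on the compact metric space `E`. -/
theorem stmt_10 {E D : Type*} [MetricSpace E] [CompactSpace E] [MeasurableSpace E] [BorelSpace E]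
    [AddCommGroup D] [Module ℝ D] [TopologicalSpace D] [IsTopologicalAddGroup D]
    [ContinuousSMul ℝ D] [LocallyConvexSpace ℝ D] [BarrelledSpace ℝ D]
    (H : D → C(E, ℝ)) (N : Set D)
    (hNconv : Convex ℝ N) (hNbal : Balanced ℝ N) (hNabs : Absorbent ℝ N) (hNcl : IsClosed N)
    (hH1 : ∀ f ∈ N, ‖H f‖ ≤ 1)
    (hHc : ∀ c : ℝ, 0 < c → ∃ M : ℝ, ∀ f ∈ c • N, ‖H f‖ ≤ M)
    (u : WeakDual ℝ D)
    (hu : u ∉ ⋃ n : ℕ, (n : ℝ) • {v : WeakDual ℝ D | ∀ f ∈ N, |v f| ≤ 1})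
    (μ : Measure E) (hμ : IsProbabilityMeasure μ) :
    (⨆ f : D, ((u f - ∫ x, (H f) x ∂μ : ℝ) : EReal)) = ⊤ :=
  stmt_10_general H N hNbal hH1 u hu μ hμ
end

section
/- Let S be a countable set, W a compact metric space, E = W^S. For f ∈ C(E) define Δ_f(x) = sup{|f(η) − f(ζ)| : η_y = ζ_y for all y ≠ x} and |||f||| = Σ_{x∈S} Δ_f(x). If f ∈ C(E) with |||f||| < ∞, then 2·‖f‖_Q ≤ |||f|||, where ‖f‖_Q = inf_{c∈ℝ}‖f − c·1‖_∞ is the quotient norm modulo constants. -/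
/-!
Changing the coordinates of a finite set `s` one at a time shows `|f η - f ζ| ≤ ∑_{x ∈ s} Δ_f(x)`
whenever `η` and `ζ` agree off `s`. Letting `s` grow, the configurations equal to `ζ` on `s` and
to `η` off `s` converge to `ζ` in the product topology, so by continuity the oscillation of `f`
is at most `|||f|||`. Centering `f` at the midpoint of its range then gives `2 ‖f‖_Q ≤ |||f|||`.
-/

/-- The oscillation `Δ_f(x)` of `f : C(W^S, ℝ)` in the coordinate `x`:
`Δ_f(x) = sup {|f η - f ζ| : η_y = ζ_y for all y ≠ x}`. -/
noncomputable def Delta {S W : Type*} [TopologicalSpace W]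
    (f : C((S → W), ℝ)) (x : S) : ℝ :=
  sSup {d : ℝ | ∃ η ζ : S → W, (∀ y : S, y ≠ x → η y = ζ y) ∧ d = |f η - f ζ|}

open Filter Topology

lemma two_mul_iInf_norm_sub_const_le {X : Type*} [TopologicalSpace X] [CompactSpace X]
    (f : C(X, ℝ)) {M : ℝ} (hM : 0 ≤ M) (hosc : ∀ x y, f x - f y ≤ M) :
    2 * ⨅ c : ℝ, ‖f - ContinuousMap.const X c‖ ≤ M := by
  have hbdd : BddBelow (Set.range fun c : ℝ => ‖f - ContinuousMap.const X c‖) :=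
    ⟨0, by rintro _ ⟨c, rfl⟩; exact norm_nonneg _⟩
  set fmax := ⨆ x, f x
  set fmin := ⨅ x, f x
  have hmid : ‖f - ContinuousMap.const X ((fmax + fmin) / 2)‖ ≤ M / 2 := by
    refine (ContinuousMap.norm_le _ (by linarith)).2 fun x => ?_
    have hrange := isCompact_range f.continuous
    have hmax : f x ≤ fmax := le_ciSup hrange.bddAbove x
    have hmin : fmin ≤ f x := ciInf_le hrange.bddBelow x
    have hosc' : fmax ≤ M + fmin :=
      have : Nonempty X := ⟨x⟩
      ciSup_le fun y => by
        linarith [le_ciInf fun z => (by linarith [hosc y z] : f y - M ≤ f z)]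
    rw [ContinuousMap.sub_apply, ContinuousMap.const_apply, Real.norm_eq_abs, abs_le]
    constructor <;> linarith
  linarith [ciInf_le hbdd ((fmax + fmin) / 2)]

section Oscillation

variable {S W : Type*} [TopologicalSpace W] [CompactSpace W] (f : C((S → W), ℝ))

lemma abs_sub_le_delta {x : S} {η ζ : S → W} (h : ∀ y, y ≠ x → η y = ζ y) :
    |f η - f ζ| ≤ Delta f x := by
  refine le_csSup ⟨2 * ‖f‖, ?_⟩ ⟨η, ζ, h, rfl⟩
  rintro _ ⟨η', ζ', -, rfl⟩
  have hη' : |f η'| ≤ ‖f‖ := f.norm_coe_le_norm η'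
  have hζ' : |f ζ'| ≤ ‖f‖ := f.norm_coe_le_norm ζ'
  linarith [abs_sub (f η') (f ζ')]

omit [CompactSpace W] in
lemma delta_nonneg (x : S) : 0 ≤ Delta f x :=
  Real.sSup_nonneg fun _ ⟨_, _, _, hd⟩ => hd ▸ abs_nonneg _

lemma abs_sub_le_sum_delta [DecidableEq S] (s : Finset S) :
    ∀ η ζ : S → W, (∀ y ∉ s, η y = ζ y) → |f η - f ζ| ≤ ∑ x ∈ s, Delta f x := by
  induction s using Finset.induction_on with
  | empty =>
    intro η ζ h
    simp [funext fun y => h y (Finset.notMem_empty y)]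
  | insert a s ha ih =>
    intro η ζ h
    set ξ := Function.update η a (ζ a)
    have hηξ : |f η - f ξ| ≤ Delta f a :=
      abs_sub_le_delta f fun y hy => (Function.update_of_ne hy _ _).symm
    have hξζ : |f ξ - f ζ| ≤ ∑ x ∈ s, Delta f x := by
      refine ih ξ ζ fun y hy => ?_
      by_cases hya : y = a
      · subst hya; exact Function.update_self ..
      · simp only [ξ, Function.update_of_ne hya]
        exact h y (by simp [hya, hy])
    rw [Finset.sum_insert ha]
    linarith [abs_sub_le (f η) (f ξ) (f ζ)]

lemma abs_sub_le_tsum_delta (hf : Summable fun x => Delta f x) (η ζ : S → W) :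
    |f η - f ζ| ≤ ∑' x, Delta f x := by
  classical
  have hconv : Tendsto (fun s : Finset S => s.piecewise ζ η) atTop (𝓝 ζ) := by
    refine tendsto_pi_nhds.2 fun x => tendsto_const_nhds.congr' ?_
    filter_upwards [eventually_ge_atTop {x}] with s hs
    exact (s.piecewise_eq_of_mem ζ η (Finset.singleton_subset_iff.1 hs)).symm
  refine le_of_tendsto' ((tendsto_const_nhds.sub ((f.continuous.tendsto ζ).comp hconv)).abs)
    fun s => ?_
  refine (abs_sub_le_sum_delta f s η _ fun y hy => ?_).trans
    (hf.sum_le_tsum s fun x _ => delta_nonneg f x)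
  simp [Finset.piecewise_eq_of_notMem _ _ _ hy]

end Oscillation

theorem stmt_14_general {S W : Type*} [MetricSpace W] [CompactSpace W]
    (f : C((S → W), ℝ)) (hf : Summable fun x : S => Delta f x) :
    2 * (⨅ c : ℝ, ‖f - ContinuousMap.const (S → W) c‖) ≤ ∑' x : S, Delta f x :=
  two_mul_iInf_norm_sub_const_le f (tsum_nonneg (delta_nonneg f)) fun η ζ =>
    (le_abs_self _).trans (abs_sub_le_tsum_delta f hf η ζ)

/-- For `E = W^S` (`S` countable, `W` compact metric) and `f ∈ C(E)` with
`|||f||| = Σ_x Δ_f(x) < ∞`, one has `2 ‖f‖_Q ≤ |||f|||`, where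
`‖f‖_Q = inf_c ‖f - c·1‖_∞` is the quotient norm modulo constants. -/
theorem stmt_14 {S W : Type*} [Countable S] [MetricSpace W] [CompactSpace W]
    (f : C((S → W), ℝ)) (hf : Summable fun x : S => Delta f x) :
    2 * (⨅ c : ℝ, ‖f - ContinuousMap.const (S → W) c‖) ≤ ∑' x : S, Delta f x :=
  stmt_14_general f hf
end

section
/- Let S be countable, W compact, E = W^S, D the triple-norm space of functions with Σ_x Δ_f(x) < ∞. Suppose rates c_Λ(η,dζ) (indexed by finite Λ ⊆ S) satisfy K := sup_x Σ_{Λ∋x} c_Λ < ∞ where c_Λ = sup_η c_Λ(η, W^Λ). Then the operator Af(η) = Σ_Λ ∫ c_Λ(η,dζ)(f(η^ζ) − f(η)) is well-defined on D and satisfies ‖Af‖_∞ ≤ K·|||f||| for all f ∈ D; in particular A: (D,‖·‖_D) → (C(E),‖·‖_∞) is a bounded linear operator. -/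
/-!
Changing `η` to `η^ζ` moves at most the coordinates in `Λ`, so going through them one at a time
gives `|f(η^ζ) - f(η)| ≤ Σ_{x ∈ Λ} Δ_f(x)` and the `Λ`-term of `Af(η)` is at most
`c_Λ · Σ_{x ∈ Λ} Δ_f(x)`. Summing over `Λ` and exchanging the two sums (in `ℝ≥0∞`, where this is
free) bounds the whole series by `Σ_x Δ_f(x) · Σ_{Λ ∋ x} c_Λ ≤ K · |||f|||`, which gives absolute
convergence and the norm bound at once.
-/

open MeasureTheory

/-- The configuration `η^ζ` equal to `ζ` on `Λ` and to `η` off `Λ`. -/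
def patch {S W : Type*} [DecidableEq S] (η : S → W) (Λ : Finset S) (ζ : {x // x ∈ Λ} → W) : S → W :=
  fun x => if h : x ∈ Λ then ζ ⟨x, h⟩ else η x

section Oscillation

variable {S W : Type*} [TopologicalSpace W] [CompactSpace W]

lemma bddAbove_oscillations (f : C((S → W), ℝ)) (x : S) :
    BddAbove {d : ℝ | ∃ η ζ : S → W, (∀ y : S, y ≠ x → η y = ζ y) ∧ d = |f η - f ζ|} := by
  refine ⟨2 * ‖f‖, ?_⟩
  rintro d ⟨η, ζ, -, rfl⟩
  calc |f η - f ζ| ≤ ‖f η‖ + ‖f ζ‖ := abs_sub _ _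
    _ ≤ 2 * ‖f‖ := by linarith [f.norm_coe_le_norm η, f.norm_coe_le_norm ζ]

lemma abs_sub_le_Delta (f : C((S → W), ℝ)) {x : S} {η ζ : S → W}
    (h : ∀ y : S, y ≠ x → η y = ζ y) : |f η - f ζ| ≤ Delta f x :=
  le_csSup (bddAbove_oscillations f x) ⟨η, ζ, h, rfl⟩

lemma Delta_nonneg (f : C((S → W), ℝ)) (x : S) : 0 ≤ Delta f x := by
  by_cases hE : Nonempty (S → W)
  · obtain ⟨η⟩ := hE
    simpa using abs_sub_le_Delta f (x := x) (fun _ _ => rfl : ∀ y, y ≠ x → η y = η y)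
  · have : {d : ℝ | ∃ η ζ : S → W, (∀ y : S, y ≠ x → η y = ζ y) ∧ d = |f η - f ζ|} = ∅ :=
      Set.eq_empty_of_forall_notMem fun _ ⟨η, _⟩ => hE ⟨η⟩
    rw [Delta, this, Real.sSup_empty]

lemma abs_sub_le_sum_Delta [DecidableEq S] (f : C((S → W), ℝ)) (Λ : Finset S) :
    ∀ η ζ : S → W, (∀ y ∉ Λ, η y = ζ y) → |f η - f ζ| ≤ ∑ x ∈ Λ, Delta f x := by
  induction Λ using Finset.induction with
  | empty =>
    intro η ζ h
    simp [funext fun y => h y (Finset.notMem_empty y)]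
  | @insert z Λ hz ih =>
    intro η ζ h
    have h_upd : ∀ y ∉ Λ, Function.update η z (ζ z) y = ζ y := by
      intro y hy
      rcases eq_or_ne y z with rfl | hyz
      · simp
      · simpa [hyz] using h y (by simp [hyz, hy])
    calc |f η - f ζ| ≤ |f η - f (Function.update η z (ζ z))|
          + |f (Function.update η z (ζ z)) - f ζ| := abs_sub_le _ _ _
      _ ≤ Delta f z + ∑ x ∈ Λ, Delta f x :=
        add_le_add (abs_sub_le_Delta f fun y hy => (Function.update_of_ne hy _ _).symm)
          (ih _ _ h_upd)
      _ = ∑ x ∈ insert z Λ, Delta f x := (Finset.sum_insert hz).symm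

lemma norm_integral_patch_sub_le [DecidableEq S] [MeasurableSpace W] (f : C((S → W), ℝ))
    (η : S → W) (Λ : Finset S) (μ : Measure ({x // x ∈ Λ} → W)) [IsFiniteMeasure μ] :
    ‖∫ ζ, (f (patch η Λ ζ) - f η) ∂μ‖ ≤ (∑ x ∈ Λ, Delta f x) * μ.real Set.univ :=
  norm_integral_le_of_norm_le_const <| .of_forall fun ζ =>
    abs_sub_le_sum_Delta f Λ _ _ fun y hy => by simp [patch, hy]

end Oscillation

lemma ENNReal.tsum_sum_mul_le {S : Type*} (d : S → ENNReal) (m : Finset S → ENNReal)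
    (k : ENNReal) (hm : ∀ x : S, ∑' Λ : {Λ : Finset S // x ∈ Λ}, m Λ ≤ k) :
    ∑' Λ : Finset S, (∑ x ∈ Λ, d x) * m Λ ≤ k * ∑' x, d x := by
  calc ∑' Λ : Finset S, (∑ x ∈ Λ, d x) * m Λ
      = ∑' (Λ : Finset S) (x : S), d x * {Λ : Finset S | x ∈ Λ}.indicator m Λ := by
        refine tsum_congr fun Λ => ?_
        rw [Finset.sum_mul, sum_eq_tsum_indicator]
        refine tsum_congr fun x => ?_
        by_cases hx : x ∈ Λ <;> simp [hx]
    _ = ∑' x : S, d x * ∑' Λ : {Λ : Finset S // x ∈ Λ}, m Λ := by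
        rw [ENNReal.tsum_comm]
        exact tsum_congr fun x => by rw [ENNReal.tsum_mul_left, ← tsum_subtype]; rfl
    _ ≤ ∑' x : S, d x * k := ENNReal.tsum_le_tsum fun x => mul_le_mul_right (hm x) _
    _ = k * ∑' x, d x := by rw [ENNReal.tsum_mul_right, mul_comm]

lemma summable_and_norm_tsum_le_of_tsum_le {ι E : Type*} [NormedAddCommGroup E] [CompleteSpace E]
    {a : ι → E} {b : ι → ENNReal} {B : ENNReal} (hab : ∀ i, ‖a i‖ ≤ (b i).toReal)
    (hb : ∑' i, b i ≤ B) (hB : B ≠ ⊤) :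
    Summable a ∧ ‖∑' i, a i‖ ≤ B.toReal := by
  have hb_ne_top : ∑' i, b i ≠ ⊤ := ne_top_of_le_ne_top hB hb
  refine ⟨.of_norm_bounded (ENNReal.summable_toReal hb_ne_top) hab, ?_⟩
  calc ‖∑' i, a i‖ ≤ ∑' i, (b i).toReal :=
        tsum_of_norm_bounded (ENNReal.hasSum_toReal hb_ne_top) hab
    _ = (∑' i, b i).toReal :=
        (ENNReal.tsum_toReal_eq fun i => ne_top_of_le_ne_top hb_ne_top (ENNReal.le_tsum i)).symm
    _ ≤ B.toReal := ENNReal.toReal_mono hB hb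

theorem stmt_16_general {S W : Type*} [DecidableEq S] [MetricSpace W] [CompactSpace W]
    [MeasurableSpace W]
    (c : ∀ Λ : Finset S, (S → W) → Measure ({x // x ∈ Λ} → W))
    [hfin : ∀ (Λ : Finset S) (η : S → W), IsFiniteMeasure (c Λ η)]
    (K : ℝ) (hKnn : 0 ≤ K)
    (hK : ∀ x : S,
      ∑' Λ : {Λ : Finset S // x ∈ Λ}, (⨆ η : S → W, c (Λ : Finset S) η Set.univ)
        ≤ ENNReal.ofReal K)
    (f : C((S → W), ℝ)) (hf : Summable fun x : S => Delta f x) (η : S → W) :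
    (Summable fun Λ : Finset S => ∫ ζ, (f (patch η Λ ζ) - f η) ∂(c Λ η)) ∧
    |∑' Λ : Finset S, ∫ ζ, (f (patch η Λ ζ) - f η) ∂(c Λ η)| ≤ K * ∑' x : S, Delta f x := by
  set b : Finset S → ENNReal :=
    fun Λ => (∑ x ∈ Λ, ENNReal.ofReal (Delta f x)) * c Λ η Set.univ
  have h_term : ∀ Λ, ‖∫ ζ, (f (patch η Λ ζ) - f η) ∂(c Λ η)‖ ≤ (b Λ).toReal := fun Λ => by
    rw [ENNReal.toReal_mul, ← ENNReal.ofReal_sum_of_nonneg fun x _ => Delta_nonneg f x,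
      ENNReal.toReal_ofReal (Finset.sum_nonneg fun x _ => Delta_nonneg f x)]
    exact norm_integral_patch_sub_le f η Λ (c Λ η)
  have h_sum : ∑' Λ, b Λ ≤ ENNReal.ofReal (K * ∑' x, Delta f x) :=
    calc ∑' Λ, b Λ
        ≤ ∑' Λ : Finset S, (∑ x ∈ Λ, ENNReal.ofReal (Delta f x)) * ⨆ η', c Λ η' Set.univ :=
          ENNReal.tsum_le_tsum fun Λ =>
            mul_le_mul_right (le_iSup (fun η' => c Λ η' Set.univ) η) _
      _ ≤ ENNReal.ofReal K * ∑' x, ENNReal.ofReal (Delta f x) := ENNReal.tsum_sum_mul_le _ _ _ hK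
      _ = ENNReal.ofReal (K * ∑' x, Delta f x) := by
          rw [ENNReal.ofReal_mul hKnn, ENNReal.ofReal_tsum_of_nonneg (Delta_nonneg f) hf]
  have := summable_and_norm_tsum_le_of_tsum_le h_term h_sum ENNReal.ofReal_ne_top
  rwa [ENNReal.toReal_ofReal (mul_nonneg hKnn (tsum_nonneg (Delta_nonneg f))),
    Real.norm_eq_abs] at this

/-- Interacting particle systems (Liggett): let `c_Λ(η, dζ)` be transition rates indexed by
finite `Λ ⊆ S` with `K ≥ sup_x Σ_{Λ ∋ x} sup_η c_Λ(η, W^Λ)`. Then for every `f` with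
`|||f||| = Σ_x Δ_f(x) < ∞`, the generator
`Af(η) = Σ_Λ ∫ c_Λ(η,dζ) (f(η^ζ) - f(η))` is well-defined (the sum over `Λ` converges)
and satisfies `‖Af‖_∞ ≤ K · |||f|||`. -/
theorem stmt_16 {S W : Type*} [DecidableEq S] [Countable S] [MetricSpace W] [CompactSpace W]
    [MeasurableSpace W] [BorelSpace W]
    (c : ∀ Λ : Finset S, (S → W) → Measure ({x // x ∈ Λ} → W))
    [hfin : ∀ (Λ : Finset S) (η : S → W), IsFiniteMeasure (c Λ η)]
    (K : ℝ) (hKnn : 0 ≤ K)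
    (hK : ∀ x : S,
      ∑' Λ : {Λ : Finset S // x ∈ Λ}, (⨆ η : S → W, c (Λ : Finset S) η Set.univ)
        ≤ ENNReal.ofReal K)
    (f : C((S → W), ℝ)) (hf : Summable fun x : S => Delta f x) (η : S → W) :
    (Summable fun Λ : Finset S => ∫ ζ, (f (patch η Λ ζ) - f η) ∂(c Λ η)) ∧
    |∑' Λ : Finset S, ∫ ζ, (f (patch η Λ ζ) - f η) ∂(c Λ η)| ≤ K * ∑' x : S, Delta f x :=
  stmt_16_general c (hfin := hfin) K hKnn hK f hf η
end

section
/- Let a: ℝ^d → ℝ^{d×d} with a(x) symmetric non-negative definite, b: ℝ^d → ℝ^d, and for f ∈ C_0²(ℝ^d) define Af = (1/2)Σ_{ij}a_{ij}∂_i∂_j f + Σ_i b_i ∂_i f and Hf = Af + (1/2)Σ_{ij}a_{ij}(∂_i f)(∂_j f). Fix a Borel probability measure μ on ℝ^d and a continuous linear functional α on C_0²(ℝ^d). Define L(μ,α) = sup_{f ∈ C_0²}(⟨f,α⟩ − ∫Hf dμ). If L(μ,α) < ∞, then, writing α̂ = α − A'μ (i.e. ⟨f,α̂⟩ = ⟨f,α⟩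 − ∫Af dμ), one has L(μ,α) = (1/2)·sup{ |⟨f,α̂⟩|² / ∫|∇f|²_a dμ : f ∈ C_0², ∫|∇f|²_a dμ ≠ 0 }, where |∇f|²_a = Σ_{ij}a_{ij}∂_i f ∂_j f; moreover ⟨f,α̂⟩ = 0 whenever ∫|∇f|²_a dμ = 0. -/
open Filter Topology MeasureTheory

/-- The partial derivative `∂_i f` of `f : ℝ^d → ℝ`. -/
noncomputable def pd {d : ℕ} (i : Fin d) (f : (Fin d → ℝ) → ℝ) : (Fin d → ℝ) → ℝ :=
  fun x => fderiv ℝ f x (Pi.single i 1)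

/-- The space `C_0²(ℝ^d)`: twice continuously differentiable functions vanishing at infinity
together with their derivatives up to order two. -/
def C02 (d : ℕ) : Set ((Fin d → ℝ) → ℝ) :=
  {f | ContDiff ℝ 2 f ∧ Tendsto f (cocompact (Fin d → ℝ)) (𝓝 0) ∧
    (∀ i : Fin d, Tendsto (pd i f) (cocompact (Fin d → ℝ)) (𝓝 0)) ∧
    ∀ i j : Fin d, Tendsto (pd i (pd j f)) (cocompact (Fin d → ℝ)) (𝓝 0)}

/-- The diffusion generator `Af = (1/2) Σ_{ij} a_{ij} ∂_i∂_j f + Σ_i b_i ∂_i f`. -/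
noncomputable def Adiff {d : ℕ} (a : (Fin d → ℝ) → Fin d → Fin d → ℝ)
    (b : (Fin d → ℝ) → Fin d → ℝ) (f : (Fin d → ℝ) → ℝ) (x : Fin d → ℝ) : ℝ :=
  (1 / 2) * (∑ i, ∑ j, a x i j * pd i (pd j f) x) + ∑ i, b x i * pd i f x

/-- The square field `|∇f|²_a = Σ_{ij} a_{ij} (∂_i f)(∂_j f)`. -/
noncomputable def gradSq {d : ℕ} (a : (Fin d → ℝ) → Fin d → Fin d → ℝ)
    (f : (Fin d → ℝ) → ℝ) (x : Fin d → ℝ) : ℝ :=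
  ∑ i, ∑ j, a x i j * pd i f x * pd j f x

/-- The Hamiltonian `Hf = Af + (1/2)|∇f|²_a`. -/
noncomputable def Hdiff {d : ℕ} (a : (Fin d → ℝ) → Fin d → Fin d → ℝ)
    (b : (Fin d → ℝ) → Fin d → ℝ) (f : (Fin d → ℝ) → ℝ) (x : Fin d → ℝ) : ℝ :=
  Adiff a b f x + (1 / 2) * gradSq a f x

/-!
Write `α̂ f = α f - ∫ Af dμ` and `Q f = ∫ |∇f|²_a dμ`, so that `α f - ∫ Hf dμ = α̂ f - Q f / 2`.
Since `C_0²` is stable under `f ↦ c • f`, with `α̂` linear and `Q` quadratic, a finite bound `r`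
on the supremum gives `c α̂ f - c² Q f / 2 ≤ r` for every `c ∈ ℝ`. Optimising over `c` yields
`α̂ f = 0` when `Q f = 0` and `(α̂ f)² / Q f ≤ 2 r` otherwise; conversely
`α̂ f - Q f / 2 ≤ (α̂ f)² / (2 Q f)` by AM–GM.
-/

lemma eq_zero_of_forall_mul_le {A r : ℝ} (h : ∀ c : ℝ, c * A ≤ r) : A = 0 := by
  by_contra hA
  have := h ((r + 1) / A)
  rw [div_mul_cancel₀ _ hA] at this
  linarith

lemma sq_div_le_of_forall_mul_sub_le {A G r : ℝ} (hG : 0 < G)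
    (h : ∀ c : ℝ, c * A - c ^ 2 * G / 2 ≤ r) : A ^ 2 / G ≤ 2 * r := by
  have := h (A / G)
  have e : A / G * A - (A / G) ^ 2 * G / 2 = A ^ 2 / G / 2 := by
    field_simp; ring
  linarith

lemma sub_half_le_half_sq_div {A G : ℝ} (hG : 0 < G) : A - G / 2 ≤ 1 / 2 * (A ^ 2 / G) := by
  rw [← sub_nonneg]
  have e : 1 / 2 * (A ^ 2 / G) - (A - G / 2) = (A - G) ^ 2 / (2 * G) := by
    field_simp; ring
  rw [e]
  positivity

section QuadraticSup

variable {E : Type*} {S : Set E} {ℓ Q : E → ℝ}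

def sqQuotients (S : Set E) (ℓ Q : E → ℝ) : Set ℝ :=
  {v | ∃ f ∈ S, Q f ≠ 0 ∧ v = ℓ f ^ 2 / Q f}

lemma mul_sub_sq_le_of_forall_sub_half_le [SMul ℝ E] (hS : ∀ f ∈ S, ∀ c : ℝ, c • f ∈ S)
    (hℓ : ∀ f ∈ S, ∀ c : ℝ, ℓ (c • f) = c * ℓ f) (hQ : ∀ f ∈ S, ∀ c : ℝ, Q (c • f) = c ^ 2 * Q f)
    {r : ℝ} (h : ∀ f ∈ S, ℓ f - Q f / 2 ≤ r) {f : E} (hf : f ∈ S) (c : ℝ) :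
    c * ℓ f - c ^ 2 * Q f / 2 ≤ r := by
  simpa [hℓ f hf c, hQ f hf c, mul_div_assoc] using h _ (hS f hf c)

lemma sub_half_le_half_sSup_sqQuotients (hQ0 : ∀ f ∈ S, 0 ≤ Q f)
    (hℓQ : ∀ f ∈ S, Q f = 0 → ℓ f = 0) (hbdd : BddAbove (sqQuotients S ℓ Q)) {f : E}
    (hf : f ∈ S) : ℓ f - Q f / 2 ≤ 1 / 2 * sSup (sqQuotients S ℓ Q) := by
  have hnonneg : 0 ≤ sSup (sqQuotients S ℓ Q) := Real.sSup_nonneg <| by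
    rintro v ⟨g, hg, -, rfl⟩
    exact div_nonneg (sq_nonneg _) (hQ0 g hg)
  obtain hQf | hQf := (hQ0 f hf).eq_or_lt
  · rw [← hQf, hℓQ f hf hQf.symm]
    linarith
  · calc ℓ f - Q f / 2 ≤ 1 / 2 * (ℓ f ^ 2 / Q f) := sub_half_le_half_sq_div hQf
      _ ≤ 1 / 2 * sSup (sqQuotients S ℓ Q) := by
        gcongr
        exact le_csSup hbdd ⟨f, hf, hQf.ne', rfl⟩

theorem iSup_sub_half_eq_half_sSup_sqQuotients [AddCommGroup E] [Module ℝ E]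
    (hS₀ : S.Nonempty) (hS : ∀ f ∈ S, ∀ c : ℝ, c • f ∈ S)
    (hℓ : ∀ f ∈ S, ∀ c : ℝ, ℓ (c • f) = c * ℓ f)
    (hQ : ∀ f ∈ S, ∀ c : ℝ, Q (c • f) = c ^ 2 * Q f) (hQ0 : ∀ f ∈ S, 0 ≤ Q f)
    (hfin : ⨆ f : S, ((ℓ f - Q f / 2 : ℝ) : EReal) ≠ ⊤) :
    (∀ f ∈ S, Q f = 0 → ℓ f = 0) ∧
      ⨆ f : S, ((ℓ f - Q f / 2 : ℝ) : EReal) =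
        ((1 / 2 * sSup (sqQuotients S ℓ Q) : ℝ) : EReal) := by
  set L := ⨆ f : S, ((ℓ f - Q f / 2 : ℝ) : EReal)
  have hle : ∀ f ∈ S, ((ℓ f - Q f / 2 : ℝ) : EReal) ≤ L := fun f hf =>
    le_iSup (fun g : S => ((ℓ g - Q g / 2 : ℝ) : EReal)) ⟨f, hf⟩
  obtain ⟨f₀, hf₀⟩ := hS₀
  have hzero : (0 : E) ∈ S := by simpa using hS f₀ hf₀ 0
  have hℓ₀ : ℓ 0 = 0 := by simpa using hℓ 0 hzero 0
  have hQ₀ : Q 0 = 0 := by simpa using hQ 0 hzero 0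
  have hL0 : (0 : EReal) ≤ L := by simpa [hℓ₀, hQ₀] using hle 0 hzero
  obtain ⟨r, hr⟩ : ∃ r : ℝ, L = r :=
    ⟨L.toReal, (EReal.coe_toReal hfin (ne_bot_of_le_ne_bot (by simp) hL0)).symm⟩
  rw [hr] at hle hL0
  have hle_r : ∀ f ∈ S, ℓ f - Q f / 2 ≤ r := fun f hf => EReal.coe_le_coe_iff.mp (hle f hf)
  have hℓQ : ∀ f ∈ S, Q f = 0 → ℓ f = 0 := fun f hf hQf =>
    eq_zero_of_forall_mul_le fun c => by
      simpa [hQf] using mul_sub_sq_le_of_forall_sub_half_le hS hℓ hQ hle_r hf c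
  have hub : ∀ v ∈ sqQuotients S ℓ Q, v ≤ 2 * r := by
    rintro v ⟨f, hf, hQf, rfl⟩
    exact sq_div_le_of_forall_mul_sub_le ((hQ0 f hf).lt_of_ne' hQf)
      (mul_sub_sq_le_of_forall_sub_half_le hS hℓ hQ hle_r hf)
  refine ⟨hℓQ, le_antisymm ?_ ?_⟩
  · exact iSup_le fun f => EReal.coe_le_coe_iff.mpr <|
      sub_half_le_half_sSup_sqQuotients hQ0 hℓQ ⟨2 * r, hub⟩ f.2
  · have hr0 : 0 ≤ r := EReal.coe_nonneg.mp hL0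
    rw [hr, EReal.coe_le_coe_iff]
    linarith [Real.sSup_le hub (by linarith)]

end QuadraticSup

section Diffusion

open scoped BoundedContinuousFunction

variable {d : ℕ}

lemma pd_smul (c : ℝ) (f : (Fin d → ℝ) → ℝ) (i : Fin d) : pd i (c • f) = c • pd i f := by
  funext x
  simp [pd, fderiv_const_smul_field]

lemma ContDiff.pd {m n : WithTop ℕ∞} {f : (Fin d → ℝ) → ℝ} (hf : ContDiff ℝ n f)
    (hmn : m + 1 ≤ n) (i : Fin d) : ContDiff ℝ m (pd i f) :=
  (hf.fderiv_right hmn).clm_apply contDiff_const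

lemma smul_mem_C02 {f : (Fin d → ℝ) → ℝ} (hf : f ∈ C02 d) (c : ℝ) : c • f ∈ C02 d := by
  obtain ⟨hdiff, hf0, hpd0, hpdpd0⟩ := hf
  refine ⟨hdiff.const_smul c, by simpa [Pi.smul_def] using hf0.const_smul c, fun i => ?_,
    fun i j => ?_⟩
  · rw [pd_smul]
    simpa [Pi.smul_def] using (hpd0 i).const_smul c
  · rw [pd_smul, pd_smul]
    simpa [Pi.smul_def] using (hpdpd0 i j).const_smul c

lemma zero_mem_C02 : (0 : (Fin d → ℝ) → ℝ) ∈ C02 d := by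
  have hpd : ∀ i : Fin d, pd i (0 : (Fin d → ℝ) → ℝ) = 0 := fun i => by
    simpa using pd_smul 0 0 i
  refine ⟨contDiff_const, tendsto_const_nhds, fun i => ?_, fun i j => ?_⟩
  · rw [hpd]; exact tendsto_const_nhds
  · rw [hpd, hpd]; exact tendsto_const_nhds

lemma Adiff_smul (a : (Fin d → ℝ) → Fin d → Fin d → ℝ) (b : (Fin d → ℝ) → Fin d → ℝ)
    (c : ℝ) (f : (Fin d → ℝ) → ℝ) (x : Fin d → ℝ) :
    Adiff a b (c • f) x = c * Adiff a b f x := by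
  simp only [Adiff, pd_smul, Pi.smul_apply, smul_eq_mul, mul_left_comm _ c, ← Finset.mul_sum]
  ring

lemma gradSq_smul (a : (Fin d → ℝ) → Fin d → Fin d → ℝ) (c : ℝ) (f : (Fin d → ℝ) → ℝ)
    (x : Fin d → ℝ) : gradSq a (c • f) x = c ^ 2 * gradSq a f x := by
  simp only [gradSq, pd_smul, Pi.smul_apply, smul_eq_mul, Finset.mul_sum]
  congr! 2 with i - j -
  ring

lemma exists_bcf_pd {f : (Fin d → ℝ) → ℝ} (hf : f ∈ C02 d) (i : Fin d) :
    ∃ P : (Fin d → ℝ) →ᵇ ℝ, ⇑P = pd i f :=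
  ⟨ZeroAtInftyContinuousMap.toBCF
    ⟨⟨pd i f, (hf.1.pd (m := 1) (by norm_num) i).continuous⟩, hf.2.2.1 i⟩, rfl⟩

lemma exists_bcf_pd_pd {f : (Fin d → ℝ) → ℝ} (hf : f ∈ C02 d) (i j : Fin d) :
    ∃ P : (Fin d → ℝ) →ᵇ ℝ, ⇑P = pd i (pd j f) :=
  ⟨ZeroAtInftyContinuousMap.toBCF
    ⟨⟨pd i (pd j f), ((hf.1.pd (m := 1) (by norm_num) j).pd (m := 0) (by norm_num) i).continuous⟩,
      hf.2.2.2 i j⟩, rfl⟩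

lemma integrable_Adiff {a : (Fin d → ℝ) → Fin d → Fin d → ℝ} {b : (Fin d → ℝ) → Fin d → ℝ}
    (ha_cont : ∀ i j, Continuous fun x => a x i j) (ha_bdd : ∃ Ca : ℝ, ∀ x i j, |a x i j| ≤ Ca)
    (hb_cont : ∀ i, Continuous fun x => b x i) (hb_bdd : ∃ Cb : ℝ, ∀ x i, |b x i| ≤ Cb)
    (μ : Measure (Fin d → ℝ)) [IsFiniteMeasure μ] {f : (Fin d → ℝ) → ℝ} (hf : f ∈ C02 d) :
    Integrable (Adiff a b f) μ := by
  obtain ⟨Ca, hCa⟩ := ha_bdd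
  obtain ⟨Cb, hCb⟩ := hb_bdd
  let A i j : (Fin d → ℝ) →ᵇ ℝ := .ofNormedAddCommGroup _ (ha_cont i j) Ca fun x => hCa x i j
  let B i : (Fin d → ℝ) →ᵇ ℝ := .ofNormedAddCommGroup _ (hb_cont i) Cb fun x => hCb x i
  choose P hP using exists_bcf_pd hf
  choose P₂ hP₂ using exists_bcf_pd_pd hf
  have hA : Adiff a b f = ⇑((1 / 2 : ℝ) • ∑ i, ∑ j, A i j * P₂ i j + ∑ i, B i * P i) := by
    funext x
    simp [Adiff, A, B, hP, hP₂]
  rw [hA]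
  exact BoundedContinuousFunction.integrable μ _

lemma integrable_gradSq {a : (Fin d → ℝ) → Fin d → Fin d → ℝ}
    (ha_cont : ∀ i j, Continuous fun x => a x i j) (ha_bdd : ∃ Ca : ℝ, ∀ x i j, |a x i j| ≤ Ca)
    (μ : Measure (Fin d → ℝ)) [IsFiniteMeasure μ] {f : (Fin d → ℝ) → ℝ} (hf : f ∈ C02 d) :
    Integrable (gradSq a f) μ := by
  obtain ⟨Ca, hCa⟩ := ha_bdd
  let A i j : (Fin d → ℝ) →ᵇ ℝ := .ofNormedAddCommGroup _ (ha_cont i j) Ca fun x => hCa x i j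
  choose P hP using exists_bcf_pd hf
  have hG : gradSq a f = ⇑(∑ i, ∑ j, A i j * P i * P j) := by
    funext x
    simp [gradSq, A, hP]
  rw [hG]
  exact BoundedContinuousFunction.integrable μ _

end Diffusion

theorem stmt_17_general {d : ℕ}
    (a : (Fin d → ℝ) → Fin d → Fin d → ℝ) (b : (Fin d → ℝ) → Fin d → ℝ)
    (ha_cont : ∀ i j, Continuous fun x => a x i j)
    (ha_bdd : ∃ Ca : ℝ, ∀ x i j, |a x i j| ≤ Ca)
    (ha_pos : ∀ (x : Fin d → ℝ) (v : Fin d → ℝ), 0 ≤ ∑ i, ∑ j, a x i j * v i * v j)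
    (hb_cont : ∀ i, Continuous fun x => b x i)
    (hb_bdd : ∃ Cb : ℝ, ∀ x i, |b x i| ≤ Cb)
    (μ : Measure (Fin d → ℝ)) [IsProbabilityMeasure μ]
    (α : ((Fin d → ℝ) → ℝ) →ₗ[ℝ] ℝ)
    (hL_fin : (⨆ f : (C02 d), ((α (f : (Fin d → ℝ) → ℝ)
        - ∫ x, Hdiff a b (f : (Fin d → ℝ) → ℝ) x ∂μ : ℝ) : EReal)) ≠ ⊤) :
    (∀ f ∈ C02 d, (∫ x, gradSq a f x ∂μ) = 0 → α f - ∫ x, Adiff a b f x ∂μ = 0) ∧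
    (⨆ f : (C02 d), ((α (f : (Fin d → ℝ) → ℝ)
        - ∫ x, Hdiff a b (f : (Fin d → ℝ) → ℝ) x ∂μ : ℝ) : EReal))
      = (((1 / 2) * sSup {v : ℝ | ∃ f ∈ C02 d, (∫ x, gradSq a f x ∂μ) ≠ 0 ∧
          v = (α f - ∫ x, Adiff a b f x ∂μ) ^ 2 / ∫ x, gradSq a f x ∂μ} : ℝ) : EReal) := by
  have hH : ∀ f ∈ C02 d, α f - ∫ x, Hdiff a b f x ∂μ
      = (α f - ∫ x, Adiff a b f x ∂μ) - (∫ x, gradSq a f x ∂μ) / 2 := fun f hf => by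
    simp only [Hdiff]
    rw [integral_add (integrable_Adiff ha_cont ha_bdd hb_cont hb_bdd μ hf)
      ((integrable_gradSq ha_cont ha_bdd μ hf).const_mul _), integral_const_mul]
    ring
  rw [iSup_congr fun f : C02 d => congrArg ((↑) : ℝ → EReal) (hH f f.2)] at hL_fin ⊢
  refine iSup_sub_half_eq_half_sSup_sqQuotients ⟨0, zero_mem_C02⟩ (fun _ => smul_mem_C02)
    (fun f _ c => ?_) (fun f _ c => ?_) (fun f _ => integral_nonneg fun x => ha_pos x _) hL_fin
  · simp only [map_smul, smul_eq_mul, Adiff_smul, integral_const_mul]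
    ring
  · simp only [gradSq_smul, integral_const_mul]

/-- Dawson–Gärtner form of the Lagrangian: with `a` symmetric non-negative definite, `b`
bounded continuous, `μ` a Borel probability measure on `ℝ^d` and `α` a continuous linear
functional on `C_0²(ℝ^d)`, if `L(μ,α) = sup_{f ∈ C_0²}(⟨f,α⟩ - ∫ Hf dμ) < ∞` then,
writing `α̂ = α - A'μ`, one has `⟨f,α̂⟩ = 0` whenever `∫|∇f|²_a dμ = 0`, and
`L(μ,α) = (1/2) sup { ⟨f,α̂⟩² / ∫|∇f|²_a dμ : f ∈ C_0², ∫|∇f|²_a dμ ≠ 0 }`. -/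
theorem stmt_17 {d : ℕ}
    (a : (Fin d → ℝ) → Fin d → Fin d → ℝ) (b : (Fin d → ℝ) → Fin d → ℝ)
    (ha_cont : ∀ i j, Continuous fun x => a x i j)
    (ha_bdd : ∃ Ca : ℝ, ∀ x i j, |a x i j| ≤ Ca)
    (ha_symm : ∀ x i j, a x i j = a x j i)
    (ha_pos : ∀ (x : Fin d → ℝ) (v : Fin d → ℝ), 0 ≤ ∑ i, ∑ j, a x i j * v i * v j)
    (hb_cont : ∀ i, Continuous fun x => b x i)
    (hb_bdd : ∃ Cb : ℝ, ∀ x i, |b x i| ≤ Cb)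
    (μ : Measure (Fin d → ℝ)) [IsProbabilityMeasure μ]
    (α : ((Fin d → ℝ) → ℝ) →ₗ[ℝ] ℝ)
    (hα_cont : ∃ Cα : ℝ, ∀ f ∈ C02 d, |α f| ≤
      Cα * ((⨆ x, |f x|) + (∑ i, ⨆ x, |pd i f x|) + ∑ i, ∑ j, ⨆ x, |pd i (pd j f) x|))
    (hL_fin : (⨆ f : (C02 d), ((α (f : (Fin d → ℝ) → ℝ)
        - ∫ x, Hdiff a b (f : (Fin d → ℝ) → ℝ) x ∂μ : ℝ) : EReal)) ≠ ⊤) :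
    (∀ f ∈ C02 d, (∫ x, gradSq a f x ∂μ) = 0 → α f - ∫ x, Adiff a b f x ∂μ = 0) ∧
    (⨆ f : (C02 d), ((α (f : (Fin d → ℝ) → ℝ)
        - ∫ x, Hdiff a b (f : (Fin d → ℝ) → ℝ) x ∂μ : ℝ) : EReal))
      = (((1 / 2) * sSup {v : ℝ | ∃ f ∈ C02 d, (∫ x, gradSq a f x ∂μ) ≠ 0 ∧
          v = (α f - ∫ x, Adiff a b f x ∂μ) ^ 2 / ∫ x, gradSq a f x ∂μ} : ℝ) : EReal) :=
  stmt_17_general a b ha_cont ha_bdd ha_pos hb_cont hb_bdd μ α hL_fin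
end
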